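/- arXiv:math/9803143 — 8 statements merged into one kernel-verified Lean document; each statement's English description precedes it below -/
import Mathlib

section
/- Let F : ℂ^n → ℂ^n be a polynomial map with F(0) = 0, written with homogeneous components F_i = Σ_j F_{(j)i}. Define the blow up F_t : ℂ^{n+1} → ℂ^{n+1} by (F_t)_i(x,t) = Σ_j t^{j-1} F_{(j)i}(x) for i ≤ n and (F_t)_{n+1}(x,t) = t. Then the Jacobian determinant satisfies F_t'(x_1,…,x_n,t) = F'(t·x_1,…,t·x_n). -/
open MvPolynomial

/-- The Jacobian matrix of a polynomial map at a point. -/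
noncomputable def jac {σ : Type*} [Fintype σ] [DecidableEq σ]
    (P : σ → MvPolynomial σ ℂ) (x : σ → ℂ) : Matrix σ σ ℂ :=
  Matrix.of fun i j => eval x (pderiv j (P i))

/-- The blow up `F_t : ℂ^{n+1} → ℂ^{n+1}` of `F`, given by
`(F_t)_i(x,t) = Σ_j t^{j-1}·F_{(j)i}(x)` for `i ≤ n` and `(F_t)_{n+1}(x,t) = t`,
where `F_{(j)i}` is the degree-`j` homogeneous component of `F_i`. -/
noncomputable def blowUp (n : ℕ) (F : Fin n → MvPolynomial (Fin n) ℂ) :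
    Fin (n + 1) → MvPolynomial (Fin (n + 1)) ℂ :=
  Fin.lastCases (X (Fin.last n)) fun i =>
    ∑ j ∈ Finset.range ((F i).totalDegree + 1),
      X (Fin.last n) ^ (j - 1) * rename Fin.castSucc (homogeneousComponent j (F i))

lemma aux_degree_sub_single {σ : Type*} [Fintype σ] [DecidableEq σ] (m : σ →₀ ℕ) (j : σ)
    (hj : m j ≠ 0) :
    Finsupp.degree (m - Finsupp.single j 1) = Finsupp.degree m - 1 := by
  have key : ∀ f : σ →₀ ℕ, Finsupp.degree f = ∑ i, f i := by
    intro f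
    exact Finset.sum_subset (Finset.subset_univ _)
      (fun i _ hi => Finsupp.notMem_support_iff.mp hi)
  rw [key, key]
  rw [← Finset.sum_erase_add _ _ (Finset.mem_univ j),
    ← Finset.sum_erase_add _ (fun i => m i) (Finset.mem_univ j)]
  have h2 : ∀ i ∈ Finset.univ.erase j, ((m - Finsupp.single j 1 : σ →₀ ℕ)) i = m i := by
    intro i hi
    rw [Finsupp.tsub_apply, Finsupp.single_apply, if_neg (Finset.ne_of_mem_erase hi).symm,
      Nat.sub_zero]
  rw [Finset.sum_congr rfl h2]
  have h3 : ((m - Finsupp.single j 1 : σ →₀ ℕ)) j = m j - 1 := by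
    rw [Finsupp.tsub_apply, Finsupp.single_apply, if_pos rfl]
  rw [h3]
  have hmj : 1 ≤ m j := Nat.one_le_iff_ne_zero.mpr hj
  have hrfl : (Finset.univ.erase j).sum ⇑m = ∑ i ∈ Finset.univ.erase j, m i := rfl
  omega

lemma aux_pderiv_homog {σ : Type*} [Fintype σ] [DecidableEq σ] {p : MvPolynomial σ ℂ} {d : ℕ}
    (h : p.IsHomogeneous d) (j : σ) : (pderiv j p).IsHomogeneous (d - 1) := by
  conv in pderiv j p => rw [p.as_sum]
  rw [map_sum]
  apply MvPolynomial.IsHomogeneous.sum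
  intro m hm
  rw [pderiv_monomial]
  by_cases hj : m j = 0
  · simp only [hj, Nat.cast_zero, mul_zero, map_zero]
    simp [isHomogeneous_zero]
  · apply isHomogeneous_monomial
    rw [aux_degree_sub_single m j hj]
    have : Finsupp.degree m = d := by
      rw [Finsupp.degree_eq_weight_one]
      exact h (mem_support_iff.mp hm)
    rw [this]

lemma aux_eval_scale {σ : Type*} [Fintype σ] {p : MvPolynomial σ ℂ} {d : ℕ}
    (h : p.IsHomogeneous d) (x : σ → ℂ) (t : ℂ) :
    eval (fun i => t * x i) p = t ^ d * eval x p := by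
  rw [eval_eq', eval_eq', Finset.mul_sum]
  apply Finset.sum_congr rfl
  intro m hm
  have hd : ∑ i, m i = d := by
    have h1 : Finsupp.degree m = d := by
      rw [Finsupp.degree_eq_weight_one]
      exact h (mem_support_iff.mp hm)
    rw [← h1]
    exact (Finset.sum_subset (Finset.subset_univ _)
      (fun i _ hi => Finsupp.notMem_support_iff.mp hi)).symm
  calc coeff m p * ∏ i, (t * x i) ^ m i
      = coeff m p * ((∏ i, t ^ m i) * ∏ i, x i ^ m i) := by
        rw [← Finset.prod_mul_distrib]; simp_rw [mul_pow]
    _ = t ^ d * (coeff m p * ∏ i, x i ^ m i) := by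
        rw [Finset.prod_pow_eq_pow_sum, hd]; ring

/-- For `F : ℂ^n → ℂ^n` with `F(0) = 0`, the Jacobian determinant of the blow up `F_t`
satisfies `F_t'(x₁,…,xₙ,t) = F'(t·x₁,…,t·xₙ)`. -/
theorem blowUp_jacobian_det (n : ℕ) (F : Fin n → MvPolynomial (Fin n) ℂ)
    (h0 : ∀ i, constantCoeff (F i) = 0) :
    ∀ (x : Fin n → ℂ) (t : ℂ),
      (jac (blowUp n F) (Fin.snoc x t)).det = (jac F (fun i => t * x i)).det := by
  intro x t
  set y : Fin n → ℂ := fun i => t * x i with hy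
  set A := jac (blowUp n F) (Fin.snoc x t) with hA
  -- entries of the last row
  have hlast : ∀ j, A (Fin.last n) j = if j = Fin.last n then 1 else 0 := by
    intro j
    simp only [hA, jac, Matrix.of_apply, blowUp, Fin.lastCases_last]
    by_cases hj : j = Fin.last n
    · subst hj; simp
    · rw [pderiv_X_of_ne (Ne.symm hj)]; simp [hj]
  -- entries of the other rows at castSucc columns
  have hmain : ∀ (i j : Fin n), A i.castSucc j.castSucc = jac F y i j := by
    intro i j
    simp only [hA, jac, Matrix.of_apply, blowUp, Fin.lastCases_castSucc]
    rw [map_sum, map_sum]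
    have hterm : ∀ k,
        eval (Fin.snoc x t : Fin (n+1) → ℂ)
          (pderiv j.castSucc (X (Fin.last n) ^ (k - 1) *
            rename Fin.castSucc (homogeneousComponent k (F i))))
        = eval y (pderiv j (homogeneousComponent k (F i))) := by
      intro k
      have hX : pderiv j.castSucc ((X (Fin.last n) : MvPolynomial (Fin (n+1)) ℂ) ^ (k - 1)) = 0 := by
        have : pderiv j.castSucc (X (Fin.last n) : MvPolynomial (Fin (n+1)) ℂ) = 0 :=
          pderiv_X_of_ne (by exact (Fin.castSucc_lt_last j).ne')
        rw [Derivation.leibniz_pow, this]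
        simp
      rw [Derivation.leibniz, hX]
      rw [pderiv_rename (Fin.castSucc_injective n)]
      simp only [smul_eq_mul, mul_zero, add_zero]
      rw [map_mul, eval_rename]
      have hsnoc : (Fin.snoc x t : Fin (n+1) → ℂ) ∘ Fin.castSucc = x := by
        funext a; simp [Fin.snoc_castSucc]
      rw [hsnoc]
      have hXpow : eval (Fin.snoc x t : Fin (n+1) → ℂ)
          ((X (Fin.last n) : MvPolynomial (Fin (n+1)) ℂ) ^ (k - 1)) = t ^ (k - 1) := by
        simp [Fin.snoc_last]
      rw [hXpow]
      rw [aux_eval_scale (aux_pderiv_homog (homogeneousComponent_isHomogeneous k (F i)) j) x t]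
    rw [Finset.sum_congr rfl (fun k _ => hterm k), ← map_sum (eval y), ← map_sum (pderiv j),
      sum_homogeneousComponent]
  -- determinant expansion along the last row
  rw [Matrix.det_succ_row A (Fin.last n)]
  have hcollapse : ∀ j ∈ Finset.univ, j ≠ Fin.last n →
      (-1 : ℂ) ^ ((Fin.last n : ℕ) + (j : ℕ)) * A (Fin.last n) j *
        (A.submatrix (Fin.last n).succAbove j.succAbove).det = 0 := by
    intro j _ hj
    rw [hlast j, if_neg hj]
    ring
  rw [Finset.sum_eq_single (Fin.last n) hcollapse (by simp)]
  have he : (-1 : ℂ) ^ ((Fin.last n : ℕ) + (Fin.last n : ℕ)) = 1 := by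
    rw [← two_mul, pow_mul]; norm_num
  rw [hlast, if_pos rfl, he, mul_one, one_mul]
  congr 1
  funext i j
  simp only [Matrix.submatrix_apply, Fin.succAbove_last]
  exact hmain i j
end

section
/- Let N : ℂ^n → ℂ^n be a polynomial map whose components are all homogeneous of degree k ≥ 1, and suppose the Jacobian matrix JN(x) is nilpotent at every point x. Then the only fixed point of N is the origin. -/
open MvPolynomial

open Finset in
/-- Euler's identity for a single monomial. -/
lemma euler_monomial_aux (n : ℕ) (d : Fin n →₀ ℕ) (c : ℂ) (x : Fin n → ℂ) :
    ∑ j, x j * eval x (pderiv j (monomial d c)) =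
      ((∑ j, d j : ℕ) : ℂ) * eval x (monomial d c) := by
  have hev : ∀ e : Fin n →₀ ℕ, ∀ a : ℂ, eval x (monomial e a) = a * ∏ i, x i ^ e i := by
    intro e a
    rw [eval_monomial, Finsupp.prod_fintype]
    intro i; exact pow_zero _
  simp only [pderiv_monomial, hev]
  rw [Nat.cast_sum, sum_mul]
  refine Finset.sum_congr rfl fun j _ => ?_
  rcases Nat.eq_zero_or_pos (d j) with h | h
  · simp [h]
  · have hd : ∀ i, (d - Finsupp.single j 1 : Fin n →₀ ℕ) i
        = if i = j then d j - 1 else d i := by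
      intro i
      rw [Finsupp.tsub_apply, Finsupp.single_apply]
      split <;> simp_all [eq_comm]
    have key : (∏ i, x i ^ (d - Finsupp.single j 1 : Fin n →₀ ℕ) i) * x j
        = ∏ i, x i ^ d i := by
      rw [← Finset.prod_erase_mul _ _ (mem_univ j), ← Finset.prod_erase_mul _ _ (mem_univ j),
        hd, if_pos rfl, mul_assoc, ← pow_succ, Nat.sub_add_cancel h]
      congr 1
      exact Finset.prod_congr rfl fun i hi => by rw [hd, if_neg (mem_erase.1 hi).1]
    rw [← key]; push_cast; ring

/-- Euler's homogeneous function theorem. -/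
lemma euler_hom_aux (n k : ℕ) (p : MvPolynomial (Fin n) ℂ) (hp : p.IsHomogeneous k)
    (x : Fin n → ℂ) :
    ∑ j, x j * eval x (pderiv j p) = (k : ℂ) * eval x p := by
  conv_lhs => rw [p.as_sum]
  conv_rhs => rw [p.as_sum]
  simp only [map_sum, Finset.mul_sum]
  rw [Finset.sum_comm]
  refine Finset.sum_congr rfl fun d hd => ?_
  rw [euler_monomial_aux]
  congr 2
  have h1 : coeff d p ≠ 0 := mem_support_iff.1 hd
  have := hp h1
  rw [← this]
  simp [Finsupp.weight_apply, Finsupp.sum_fintype]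

/-- A polynomial map with components homogeneous of degree `k ≥ 1` and everywhere
nilpotent Jacobian has the origin as its only fixed point. -/
theorem homogeneous_nilpotent_fixed_point_eq_zero (n k : ℕ) (hk : 1 ≤ k)
    (N : Fin n → MvPolynomial (Fin n) ℂ)
    (hhom : ∀ i, (N i).IsHomogeneous k)
    (hnil : ∀ x : Fin n → ℂ, jac N x ^ n = 0)
    (x : Fin n → ℂ) (hfix : (fun i => eval x (N i)) = x) :
    x = 0 := by
  have hstep : (jac N x).mulVec x = (k : ℂ) • x := by
    funext i
    show ∑ j, eval x (pderiv j (N i)) * x j = (k : ℂ) * x i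
    calc ∑ j, eval x (pderiv j (N i)) * x j
        = ∑ j, x j * eval x (pderiv j (N i)) := by
          exact Finset.sum_congr rfl fun j _ => mul_comm _ _
      _ = (k : ℂ) * eval x (N i) := euler_hom_aux n k (N i) (hhom i) x
      _ = (k : ℂ) * x i := by rw [congrFun hfix i]
  have hpow : ∀ m : ℕ, (jac N x ^ m).mulVec x = ((k : ℂ) ^ m) • x := by
    intro m
    induction m with
    | zero => simp [Matrix.mulVec_one]
    | succ m ih =>
      rw [pow_succ', ← Matrix.mulVec_mulVec, ih, Matrix.mulVec_smul, hstep,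
        smul_smul, pow_succ, mul_comm]
  have h0 : ((k : ℂ) ^ n) • x = 0 := by
    rw [← hpow n, hnil x, Matrix.zero_mulVec]
  have hk0 : (k : ℂ) ^ n ≠ 0 := pow_ne_zero _ (by exact_mod_cast Nat.one_le_iff_ne_zero.1 hk)
  exact (smul_eq_zero.1 h0).resolve_left hk0
end

section
/- Let N = N_{(k₁)} + N_{(k₂)} : ℂ^n → ℂ^n where N_{(k₁)} and N_{(k₂)} are polynomial maps with components homogeneous of degrees k₁ < k₂, both positive, and suppose the Jacobian matrix of N is nilpotent at every point. Then N has at most one fixed point. -/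
open MvPolynomial

lemma degree_eq_sum_univ {n : ℕ} (d : Fin n →₀ ℕ) : d.degree = ∑ i, d i :=
  Finset.sum_subset (Finset.subset_univ _) fun i _ hi => Finsupp.notMem_support_iff.mp hi

lemma eval_monomial' {n : ℕ} (x : Fin n → ℂ) (d : Fin n →₀ ℕ) (r : ℂ) :
    eval x (monomial d r) = r * ∏ i, x i ^ d i := by
  rw [eval_monomial, Finsupp.prod_fintype]
  intro i; exact pow_zero _

lemma mem_support_degree {n k : ℕ} {φ : MvPolynomial (Fin n) ℂ} (hφ : φ.IsHomogeneous k)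
    {d : Fin n →₀ ℕ} (hd : d ∈ φ.support) : d.degree = k := by
  by_contra h
  exact MvPolynomial.mem_support_iff.mp hd (hφ.coeff_eq_zero h)

lemma sub_single_add {n : ℕ} {d : Fin n →₀ ℕ} {j : Fin n} (h : 0 < d j) (i : Fin n) :
    d i = (d - Finsupp.single j 1 : Fin n →₀ ℕ) i + (if j = i then 1 else 0) := by
  rcases eq_or_ne j i with rfl | hne
  · simp [Finsupp.tsub_apply, Finsupp.single_apply]; omega
  · simp [Finsupp.tsub_apply, Finsupp.single_apply, hne]

lemma eval_smul_homog {n k : ℕ} {φ : MvPolynomial (Fin n) ℂ} (hφ : φ.IsHomogeneous k)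
    (t : ℂ) (x : Fin n → ℂ) : eval (t • x) φ = t ^ k * eval x φ := by
  conv_lhs => rw [φ.as_sum]
  conv_rhs => rw [φ.as_sum]
  rw [map_sum, map_sum, Finset.mul_sum]
  refine Finset.sum_congr rfl fun d hd => ?_
  rw [eval_monomial', eval_monomial']
  have hdeg : ∑ i, d i = k := by rw [← degree_eq_sum_univ]; exact mem_support_degree hφ hd
  have : ∏ i, (t • x) i ^ d i = t ^ k * ∏ i, x i ^ d i := by
    simp only [Pi.smul_apply, smul_eq_mul, mul_pow]
    rw [Finset.prod_mul_distrib, Finset.prod_pow_eq_pow_sum, hdeg]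
  rw [this]; ring

lemma pderiv_homog {n k : ℕ} {φ : MvPolynomial (Fin n) ℂ} (hφ : φ.IsHomogeneous k)
    (j : Fin n) : (pderiv j φ).IsHomogeneous (k - 1) := by
  conv => rw [φ.as_sum]
  rw [map_sum]
  apply IsHomogeneous.sum
  intro d hd
  rw [pderiv_monomial]
  rcases Nat.eq_zero_or_pos (d j) with h | h
  · rw [h]; simp only [Nat.cast_zero, mul_zero, map_zero]; apply isHomogeneous_zero
  · apply isHomogeneous_monomial
    have hdeg := mem_support_degree hφ hd
    rw [degree_eq_sum_univ] at hdeg ⊢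
    have hsum : ∑ i, d i = (∑ i, (d - Finsupp.single j 1 : Fin n →₀ ℕ) i) + 1 := by
      rw [Finset.sum_congr rfl fun i _ => sub_single_add h i, Finset.sum_add_distrib,
        Finset.sum_ite_eq]
      simp
    omega

lemma euler {n k : ℕ} {φ : MvPolynomial (Fin n) ℂ} (hφ : φ.IsHomogeneous k) (x : Fin n → ℂ) :
    ∑ j, x j * eval x (pderiv j φ) = k * eval x φ := by
  conv_lhs => rw [φ.as_sum]
  conv_rhs => rw [φ.as_sum]
  simp only [map_sum, Finset.mul_sum]
  rw [Finset.sum_comm]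
  refine Finset.sum_congr rfl fun d hd => ?_
  have hdeg : ∑ i, d i = k := by rw [← degree_eq_sum_univ]; exact mem_support_degree hφ hd
  set r := coeff d φ with hr
  have key : ∀ j, x j * eval x (pderiv j (monomial d r)) = (d j : ℂ) * (r * ∏ i, x i ^ d i) := by
    intro j
    rw [pderiv_monomial, eval_monomial']
    rcases Nat.eq_zero_or_pos (d j) with h | h
    · rw [h]; simp
    · have hprod : ∏ i, x i ^ d i = (∏ i, x i ^ ((d - Finsupp.single j 1 : Fin n →₀ ℕ) i)) * x j := by
        rw [Finset.prod_congr rfl fun i _ => by rw [sub_single_add h i]]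
        simp only [pow_add, Finset.prod_mul_distrib]
        congr 1
        rw [Finset.prod_congr rfl fun i (_ : i ∈ Finset.univ) =>
          (by split <;> simp : x i ^ (if j = i then 1 else 0) = if j = i then x i else 1)]
        simp
      rw [hprod]; push_cast; ring
  rw [Finset.sum_congr rfl fun j _ => key j, ← Finset.sum_mul, eval_monomial']
  have : (∑ j, ((d j : ℂ))) = (k : ℂ) := by rw [← Nat.cast_sum, hdeg]
  rw [this]

lemma fixed_eq_zero (n k₁ k₂ : ℕ)
    (hk₁ : 0 < k₁) (hk : k₁ < k₂)
    (P Q : Fin n → MvPolynomial (Fin n) ℂ)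
    (hP : ∀ i, (P i).IsHomogeneous k₁) (hQ : ∀ i, (Q i).IsHomogeneous k₂)
    (hnil : ∀ x : Fin n → ℂ, jac (fun i => P i + Q i) x ^ n = 0)
    (x : Fin n → ℂ) (hfix : (fun i => eval x (P i + Q i)) = x) : x = 0 := by
  have hk₁0 : (k₁ : ℂ) ≠ 0 := Nat.cast_ne_zero.mpr hk₁.ne'
  have hk₂0 : (k₂ : ℂ) ≠ 0 := Nat.cast_ne_zero.mpr (hk₁.trans hk).ne'
  set A : Matrix (Fin n) (Fin n) ℂ := Matrix.of fun i j => eval x (pderiv j (P i)) with hA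
  set B : Matrix (Fin n) (Fin n) ℂ := Matrix.of fun i j => eval x (pderiv j (Q i)) with hB
  obtain ⟨t, ht⟩ := IsAlgClosed.exists_pow_nat_eq ((k₁ : ℂ) / k₂) (Nat.sub_pos_of_lt hk)
  have ht0 : t ≠ 0 := by
    rintro rfl
    rw [zero_pow (by omega)] at ht
    exact hk₁0 (by field_simp at ht; simpa using ht.symm)
  have htk : t ^ (k₁ - 1) ≠ 0 := pow_ne_zero _ ht0
  have hjac : jac (fun i => P i + Q i) (t • x) = t ^ (k₁ - 1) • A + t ^ (k₂ - 1) • B := by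
    ext i j
    simp only [jac, Matrix.of_apply, Matrix.add_apply, Matrix.smul_apply, hA, hB, map_add,
      smul_eq_mul]
    rw [eval_smul_homog (pderiv_homog (hP i) j), eval_smul_homog (pderiv_homog (hQ i) j)]
  have hM' : (t ^ (k₁ - 1) • A + t ^ (k₂ - 1) • B) ^ n = 0 := by
    rw [← hjac]; exact hnil (t • x)
  set c : ℂ := ((k₁ : ℂ) * t ^ (k₁ - 1))⁻¹ with hc
  have hc1 : c * t ^ (k₁ - 1) = (k₁ : ℂ)⁻¹ := by
    rw [hc, mul_inv, mul_assoc, inv_mul_cancel₀ htk, mul_one]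
  have hc2 : c * t ^ (k₂ - 1) = (k₂ : ℂ)⁻¹ := by
    have hsplit : t ^ (k₂ - 1) = t ^ (k₂ - k₁) * t ^ (k₁ - 1) := by
      rw [← pow_add]; congr 1; omega
    rw [hsplit, ht, hc]
    field_simp
  set M : Matrix (Fin n) (Fin n) ℂ := (k₁ : ℂ)⁻¹ • A + (k₂ : ℂ)⁻¹ • B with hM
  have hMeq : M = c • (t ^ (k₁ - 1) • A + t ^ (k₂ - 1) • B) := by
    rw [hM, smul_add, smul_smul, smul_smul, hc1, hc2]
  have hMn : M ^ n = 0 := by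
    rw [hMeq, smul_pow, hM', smul_zero]
  have hfix' : ∀ i, eval x (P i) + eval x (Q i) = x i := by
    intro i
    have := congrFun hfix i
    simpa [map_add] using this
  have hMx : M.mulVec x = x := by
    funext i
    have e1 : ∑ j, A i j * x j = (k₁ : ℂ) * eval x (P i) := by
      rw [← euler (hP i) x]
      exact Finset.sum_congr rfl fun j _ => mul_comm _ _
    have e2 : ∑ j, B i j * x j = (k₂ : ℂ) * eval x (Q i) := by
      rw [← euler (hQ i) x]
      exact Finset.sum_congr rfl fun j _ => mul_comm _ _
    simp only [hM, Matrix.mulVec, dotProduct, Matrix.add_apply, Matrix.smul_apply,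
      smul_eq_mul, add_mul, Finset.sum_add_distrib, mul_assoc, ← Finset.mul_sum]
    rw [e1, e2, inv_mul_cancel_left₀ hk₁0, inv_mul_cancel_left₀ hk₂0]
    exact hfix' i
  have hpow : ∀ m, (M ^ m).mulVec x = x := by
    intro m
    induction m with
    | zero => simp [Matrix.one_mulVec]
    | succ m ih => rw [pow_succ, ← Matrix.mulVec_mulVec, hMx, ih]
  have := hpow n
  rw [hMn, Matrix.zero_mulVec] at this
  exact this.symm

/-- A polynomial map `N = N_{(k₁)} + N_{(k₂)}`, sum of maps with components homogeneous of
degrees `0 < k₁ < k₂`, whose Jacobian matrix is nilpotent at every point, has at most one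
fixed point. -/
theorem two_homogeneous_nilpotent_at_most_one_fixed_point (n k₁ k₂ : ℕ)
    (hk₁ : 0 < k₁) (hk : k₁ < k₂)
    (P Q : Fin n → MvPolynomial (Fin n) ℂ)
    (hP : ∀ i, (P i).IsHomogeneous k₁) (hQ : ∀ i, (Q i).IsHomogeneous k₂)
    (hnil : ∀ x : Fin n → ℂ, jac (fun i => P i + Q i) x ^ n = 0) :
    ∀ x y : Fin n → ℂ,
      (fun i => eval x (P i + Q i)) = x → (fun i => eval y (P i + Q i)) = y → x = y := by
  intro x y hx hy
  rw [fixed_eq_zero n k₁ k₂ hk₁ hk P Q hP hQ hnil x hx,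
    fixed_eq_zero n k₁ k₂ hk₁ hk P Q hP hQ hnil y hy]
end

section
/- Let N = N_{(k₁)} + N_{(k₂)} with components homogeneous of degrees k₁ < k₂ (both positive), and let x ∈ ℂ^n be a fixed point of N with x ≠ 0. Set λ = (k₁/k₂)^{1/(k₂−k₁)} (choosing some complex root). Then x is an eigenvector of the Jacobian matrix JN(λ·x) with nonzero eigenvalue k₁^{(k₂−1)/(k₂−k₁)} / k₂^{(k₁−1)/(k₂−k₁)}. -/
open MvPolynomial

lemma degree_sum_univ {n : ℕ} (d : Fin n →₀ ℕ) : ∑ i, d i = d.degree :=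
  (Finset.sum_subset (Finset.subset_univ _)
    fun i _ hi => Finsupp.notMem_support_iff.mp hi).symm

/-- Evaluating a homogeneous polynomial at a scaled point. -/
lemma eval_smul_of_isHomogeneous {n : ℕ} {φ : MvPolynomial (Fin n) ℂ} {k : ℕ}
    (hφ : φ.IsHomogeneous k) (c : ℂ) (x : Fin n → ℂ) :
    eval (c • x) φ = c ^ k * eval x φ := by
  conv_lhs => rw [φ.as_sum]
  conv_rhs => rw [φ.as_sum]
  rw [map_sum, map_sum, Finset.mul_sum]
  refine Finset.sum_congr rfl fun d hd => ?_
  have hdeg : d.degree = k := by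
    rw [Finsupp.degree_eq_weight_one]; exact hφ (mem_support_iff.mp hd)
  rw [eval_monomial, eval_monomial, Finsupp.prod_pow, Finsupp.prod_pow]
  have : (∏ i, (c • x) i ^ d i) = c ^ k * ∏ i, x i ^ d i := by
    have h1 : ∀ i ∈ Finset.univ, (c • x) i ^ d i = c ^ d i * x i ^ d i := by
      intro i _; simp [mul_pow]
    rw [Finset.prod_congr rfl h1, Finset.prod_mul_distrib, Finset.prod_pow_eq_pow_sum,
      degree_sum_univ, hdeg]
  rw [this]; ring

/-- Euler's identity for a single monomial. -/
lemma euler_monomial {n : ℕ} (x : Fin n → ℂ) (d : Fin n →₀ ℕ) (a : ℂ) (j : Fin n) :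
    x j * eval x (pderiv j (monomial d a)) = (d j : ℂ) * eval x (monomial d a) := by
  rw [pderiv_monomial, eval_monomial, eval_monomial, Finsupp.prod_pow, Finsupp.prod_pow]
  rcases Nat.eq_zero_or_pos (d j) with h | h
  · simp [h]
  · have hsub : ∀ i : Fin n, ((d - Finsupp.single j 1 : Fin n →₀ ℕ)) i
        = if i = j then d j - 1 else d i := by
      intro i
      rw [Finsupp.tsub_apply]
      by_cases hij : i = j
      · subst hij; simp
      · simp [Finsupp.single_eq_of_ne (Ne.symm hij), hij]
    rw [← Finset.mul_prod_erase Finset.univ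
        (fun i => x i ^ ((d - Finsupp.single j 1 : Fin n →₀ ℕ)) i) (Finset.mem_univ j),
      ← Finset.mul_prod_erase Finset.univ (fun i => x i ^ d i) (Finset.mem_univ j)]
    have hprod : (∏ i ∈ Finset.univ.erase j, x i ^ ((d - Finsupp.single j 1 : Fin n →₀ ℕ)) i)
        = ∏ i ∈ Finset.univ.erase j, x i ^ d i := by
      refine Finset.prod_congr rfl fun i hi => ?_
      rw [hsub i, if_neg (Finset.ne_of_mem_erase hi)]
    have hx : x j * x j ^ (((d - Finsupp.single j 1 : Fin n →₀ ℕ)) j) = x j ^ d j := by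
      rw [hsub j, if_pos rfl, ← pow_succ', Nat.sub_add_cancel h]
    rw [hprod]
    calc x j * (a * ↑(d j) * (x j ^ ((d - Finsupp.single j 1 : Fin n →₀ ℕ)) j
          * ∏ i ∈ Finset.univ.erase j, x i ^ d i))
        = (d j : ℂ) * (a * ((x j * x j ^ ((d - Finsupp.single j 1 : Fin n →₀ ℕ)) j)
          * ∏ i ∈ Finset.univ.erase j, x i ^ d i)) := by ring
      _ = _ := by rw [hx]

/-- Euler's identity for homogeneous polynomials. -/
lemma euler_identity {n : ℕ} {φ : MvPolynomial (Fin n) ℂ} {k : ℕ}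
    (hφ : φ.IsHomogeneous k) (x : Fin n → ℂ) :
    ∑ j, x j * eval x (pderiv j φ) = (k : ℂ) * eval x φ := by
  conv_lhs => rw [φ.as_sum]
  conv_rhs => rw [φ.as_sum]
  simp_rw [map_sum, Finset.mul_sum]
  rw [Finset.sum_comm]
  refine Finset.sum_congr rfl fun d hd => ?_
  have hdeg : d.degree = k := by
    rw [Finsupp.degree_eq_weight_one]; exact hφ (mem_support_iff.mp hd)
  simp_rw [euler_monomial, ← Finset.sum_mul]
  congr 1
  rw [← hdeg, ← degree_sum_univ, Nat.cast_sum]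

/-- Let `N = N_{(k₁)} + N_{(k₂)}` with components homogeneous of degrees `0 < k₁ < k₂`, and
let `x ≠ 0` be a fixed point of `N`.  If `λ` is a complex root of `λ^{k₂−k₁} = k₁/k₂`, then
`x` is an eigenvector of `JN(λ·x)` with the nonzero eigenvalue `k₁·λ^{k₁−1}`
(which equals `k₁^{(k₂−1)/(k₂−k₁)} / k₂^{(k₁−1)/(k₂−k₁)}`). -/
theorem fixed_point_eigenvector_of_two_homogeneous (n k₁ k₂ : ℕ)
    (hk₁ : 0 < k₁) (hk : k₁ < k₂)
    (P Q : Fin n → MvPolynomial (Fin n) ℂ)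
    (hP : ∀ i, (P i).IsHomogeneous k₁) (hQ : ∀ i, (Q i).IsHomogeneous k₂)
    (x : Fin n → ℂ) (hx : x ≠ 0)
    (hfix : (fun i => eval x (P i + Q i)) = x)
    (lam : ℂ) (hlam : lam ^ (k₂ - k₁) = (k₁ : ℂ) / (k₂ : ℂ)) :
    (jac (fun i => P i + Q i) (lam • x)).mulVec x
        = ((k₁ : ℂ) * lam ^ (k₁ - 1)) • x ∧
      (k₁ : ℂ) * lam ^ (k₁ - 1) ≠ 0 := by
  have hk₂ : 0 < k₂ := hk₁.trans hk
  have hk1c : (k₁ : ℂ) ≠ 0 := Nat.cast_ne_zero.mpr hk₁.ne'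
  have hk2c : (k₂ : ℂ) ≠ 0 := Nat.cast_ne_zero.mpr hk₂.ne'
  have hlam0 : lam ≠ 0 := by
    intro h
    rw [h, zero_pow (Nat.sub_ne_zero_of_lt hk)] at hlam
    exact (div_ne_zero hk1c hk2c) hlam.symm
  have hpow1 : (k₁ : ℂ) * lam ^ k₁ = lam * ((k₁ : ℂ) * lam ^ (k₁ - 1)) := by
    have h : lam ^ k₁ = lam * lam ^ (k₁ - 1) := by
      conv_lhs => rw [← Nat.sub_add_cancel hk₁, pow_succ]
      ring
    rw [h]; ring
  constructor
  · funext i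
    have hEulerP := euler_identity (hP i) (lam • x)
    have hEulerQ := euler_identity (hQ i) (lam • x)
    have hscaleP := eval_smul_of_isHomogeneous (hP i) lam x
    have hscaleQ := eval_smul_of_isHomogeneous (hQ i) lam x
    have hxi : eval x (P i) + eval x (Q i) = x i := by
      have := congrFun hfix i
      simpa [map_add] using this
    have hmv : (jac (fun i => P i + Q i) (lam • x)).mulVec x i
        = ∑ j, x j * eval (lam • x) (pderiv j (P i))
          + ∑ j, x j * eval (lam • x) (pderiv j (Q i)) := by
      simp only [jac, Matrix.mulVec, dotProduct, Matrix.of_apply, map_add,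
        ← Finset.sum_add_distrib]
      refine Finset.sum_congr rfl fun j _ => ?_
      ring
    have hsumP : ∑ j, (lam • x) j * eval (lam • x) (pderiv j (P i))
        = lam * ∑ j, x j * eval (lam • x) (pderiv j (P i)) := by
      rw [Finset.mul_sum]
      refine Finset.sum_congr rfl fun j _ => ?_
      simp only [Pi.smul_apply, smul_eq_mul]; ring
    have hsumQ : ∑ j, (lam • x) j * eval (lam • x) (pderiv j (Q i))
        = lam * ∑ j, x j * eval (lam • x) (pderiv j (Q i)) := by
      rw [Finset.mul_sum]
      refine Finset.sum_congr rfl fun j _ => ?_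
      simp only [Pi.smul_apply, smul_eq_mul]; ring
    rw [hsumP, hscaleP] at hEulerP
    rw [hsumQ, hscaleQ] at hEulerQ
    have hP' : ∑ j, x j * eval (lam • x) (pderiv j (P i))
        = (k₁ : ℂ) * lam ^ (k₁ - 1) * eval x (P i) := by
      apply mul_left_cancel₀ hlam0
      calc lam * ∑ j, x j * eval (lam • x) (pderiv j (P i))
          = (k₁ : ℂ) * (lam ^ k₁ * eval x (P i)) := hEulerP
        _ = ((k₁ : ℂ) * lam ^ k₁) * eval x (P i) := by ring
        _ = lam * ((k₁ : ℂ) * lam ^ (k₁ - 1) * eval x (P i)) := by rw [hpow1]; ring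
    have hQ' : ∑ j, x j * eval (lam • x) (pderiv j (Q i))
        = (k₁ : ℂ) * lam ^ (k₁ - 1) * eval x (Q i) := by
      have hpow : (k₂ : ℂ) * lam ^ k₂ = (k₁ : ℂ) * lam ^ k₁ := by
        have h1 : lam ^ k₂ = lam ^ k₁ * lam ^ (k₂ - k₁) := by
          rw [← pow_add, Nat.add_sub_cancel' hk.le]
        rw [h1, hlam]
        field_simp
      apply mul_left_cancel₀ hlam0
      calc lam * ∑ j, x j * eval (lam • x) (pderiv j (Q i))
          = (k₂ : ℂ) * (lam ^ k₂ * eval x (Q i)) := hEulerQ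
        _ = ((k₂ : ℂ) * lam ^ k₂) * eval x (Q i) := by ring
        _ = ((k₁ : ℂ) * lam ^ k₁) * eval x (Q i) := by rw [hpow]
        _ = lam * ((k₁ : ℂ) * lam ^ (k₁ - 1) * eval x (Q i)) := by rw [hpow1]; ring
    rw [hmv, hP', hQ']
    simp only [Pi.smul_apply, smul_eq_mul]
    rw [← mul_add, hxi]
  · exact mul_ne_zero hk1c (pow_ne_zero _ hlam0)
end

section
/- The Jacobian Conjecture holds in polynomial degree at most 2: if F : ℂ^n → ℂ^n is a polynomial map with deg F_i ≤ 2 for all i and det JF(x) = 1 for all x, then F is injective. -/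
open MvPolynomial Finset

lemma degsum_cases {n : ℕ} (d : Fin n →₀ ℕ) (hd : (d.sum fun _ e => e) ≤ 2) :
    d = 0 ∨ (∃ i, d = Finsupp.single i 1) ∨
      (∃ i j, d = Finsupp.single i 1 + Finsupp.single j 1) := by
  have hc : Multiset.card d.toMultiset ≤ 2 := by
    rw [Finsupp.card_toMultiset]; exact hd
  have hback : d = d.toMultiset.toFinsupp := by rw [Finsupp.toMultiset_toFinsupp]
  interval_cases h : Multiset.card d.toMultiset
  · left
    obtain h := Multiset.card_eq_zero.mp h
    rw [hback, h, Multiset.toFinsupp_zero]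
  · right; left
    obtain ⟨a, ha⟩ := Multiset.card_eq_one.mp h
    exact ⟨a, by rw [hback, ha, Multiset.toFinsupp_singleton]⟩
  · right; right
    obtain ⟨a, b, hab⟩ := Multiset.card_eq_two.mp h
    refine ⟨a, b, ?_⟩
    rw [hback, hab]
    rw [show ({a, b} : Multiset (Fin n)) = {a} + {b} by rfl]
    rw [map_add, Multiset.toFinsupp_singleton, Multiset.toFinsupp_singleton]

lemma key_mono {n : ℕ} (a b : Fin n → ℂ) (c : ℂ) (d : Fin n →₀ ℕ)
    (hd : (d.sum fun _ e => e) ≤ 2) :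
    eval b (monomial d c) - eval a (monomial d c)
      = ∑ j, (b j - a j) *
          eval (fun i => (a i + b i) / 2) (pderiv j (monomial d c)) := by
  rcases degsum_cases d hd with h | ⟨i, h⟩ | ⟨i, j, h⟩ <;> subst h
  · simp [monomial_zero', pderiv_C]
  · have : (monomial (Finsupp.single i 1)) c = C c * X i := by
      rw [X, C_mul_monomial, mul_one]
    rw [this]
    simp only [eval_mul, eval_C, eval_X, pderiv_C_mul, pderiv_X]
    rw [Finset.sum_eq_single i]
    · simp; ring
    · intro k _ hk
      simp [Pi.single_apply, hk]
    · simp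
  · have : (monomial (Finsupp.single i 1 + Finsupp.single j 1)) c
        = C c * X i * X j := by
      rw [mul_assoc, X, X, monomial_mul, mul_one, C_mul_monomial, mul_one]
    rw [this]
    have expand : ∀ k, eval (fun i => (a i + b i) / 2) (pderiv k (C c * X i * X j))
        = c * ((if k = i then 1 else 0) * ((a j + b j)/2)
            + ((a i + b i)/2) * (if k = j then 1 else 0)) := by
      intro k
      rw [mul_assoc, pderiv_C_mul, pderiv_mul, pderiv_X, pderiv_X]
      simp only [Pi.single_apply, ite_smul, one_smul, zero_smul, smul_eq_mul]
      rcases eq_or_ne k i with rfl | hik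
      · rcases eq_or_ne k j with rfl | hjk
        · simp [apply_ite (eval fun i => (a i + b i) / 2), mul_comm]
        · simp [hjk, hjk.symm, apply_ite (eval fun i => (a i + b i) / 2), mul_comm]
      · rcases eq_or_ne k j with rfl | hjk
        · simp [hik, hik.symm, apply_ite (eval fun i => (a i + b i) / 2), mul_comm]
        · simp [hik, hjk, hik.symm, hjk.symm]
    simp only [expand, eval_mul, eval_C, eval_X]
    simp only [mul_add, Finset.sum_add_distrib, mul_ite, mul_one, mul_zero,
      ite_mul, zero_mul, ← mul_assoc]
    rw [Finset.sum_ite_eq' Finset.univ i, Finset.sum_ite_eq' Finset.univ j]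
    simp only [Finset.mem_univ, if_true]
    ring

lemma key {n : ℕ} (a b : Fin n → ℂ) (P : MvPolynomial (Fin n) ℂ)
    (h : P.totalDegree ≤ 2) :
    eval b P - eval a P
      = ∑ j, (b j - a j) * eval (fun i => (a i + b i) / 2) (pderiv j P) := by
  conv_lhs => rw [P.as_sum]
  conv_rhs => rw [P.as_sum]
  simp only [map_sum, Finset.mul_sum, Finset.sum_sub_distrib]
  rw [Finset.sum_comm]
  rw [← Finset.sum_sub_distrib]
  refine Finset.sum_congr rfl fun d hd => ?_
  exact key_mono a b _ d (le_trans (le_totalDegree hd) h)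


/-- The Jacobian Conjecture in polynomial degree at most `2`: a polynomial map
`F : ℂ^n → ℂ^n` with `deg Fᵢ ≤ 2` and `det JF(x) = 1` for all `x` is injective. -/
theorem jacobian_conjecture_degree_two (n : ℕ)
    (F : Fin n → MvPolynomial (Fin n) ℂ)
    (hdeg : ∀ i, (F i).totalDegree ≤ 2)
    (hdet : ∀ x : Fin n → ℂ, (jac F x).det = 1) :
    Function.Injective (fun (x : Fin n → ℂ) i => eval x (F i)) := by
  intro x y hxy
  set m : Fin n → ℂ := fun i => (x i + y i) / 2 with hm
  have hz : (jac F m).mulVec (fun j => y j - x j) = 0 := by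
    funext i
    have h0 : eval y (F i) - eval x (F i) = 0 := by
      have := congrFun hxy i
      simp only at this
      rw [this, sub_self]
    have := key x y (F i) (hdeg i)
    simp only [Matrix.mulVec, dotProduct, jac, Matrix.of_apply, Pi.zero_apply]
    rw [← h0, this]
    exact Finset.sum_congr rfl fun j _ => mul_comm _ _
  have hinj : Function.Injective ((jac F m).mulVec) :=
    Matrix.mulVec_injective_iff_isUnit.mpr (by rw [Matrix.isUnit_iff_isUnit_det, hdet]; exact isUnit_one)
  have : (fun j => y j - x j) = (0 : Fin n → ℂ) := by
    apply hinj
    rw [hz, Matrix.mulVec_zero]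
  funext j
  have := congrFun this j
  simp only [Pi.zero_apply, sub_eq_zero] at this
  exact this.symm
end

section
/- If F = Id − F_{(2)} : ℂ^n → ℂ^n, where F_{(2)} has components homogeneous of degree 2, has Jacobian determinant identically 1, then F is injective. (Key step: if F(a) = F(b) with a ≠ b, then x = a − b gives a nonzero point with JF_{(2)} data contradicting nilpotency via Euler's formula.) -/
open MvPolynomial

lemma finsupp_degree_two {σ : Type*} (s : σ →₀ ℕ) (h : s.degree = 2) :
    ∃ i j, s = Finsupp.single i 1 + Finsupp.single j 1 := by
  classical
  have hc : Multiset.card s.toMultiset = 2 := by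
    rw [Finsupp.card_toMultiset, ← h]; rfl
  obtain ⟨i, j, hij⟩ := Multiset.card_eq_two.mp hc
  refine ⟨i, j, ?_⟩
  have h2 : s.toMultiset = (Finsupp.single i 1 + Finsupp.single j 1).toMultiset := by
    simp [hij, Finsupp.toMultiset_add, Finsupp.toMultiset_single, Multiset.insert_eq_cons,
      Multiset.singleton_add]
  have h3 := congrArg Multiset.toFinsupp h2
  rwa [Finsupp.toMultiset_toFinsupp, Finsupp.toMultiset_toFinsupp] at h3

lemma midpoint_eval {n : ℕ} (P : MvPolynomial (Fin n) ℂ) (hP : P.IsHomogeneous 2)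
    (a b : Fin n → ℂ) :
    eval a P - eval b P =
      ∑ j, eval (fun k => (a k + b k) / 2) (pderiv j P) * (a j - b j) := by
  set m : Fin n → ℂ := fun k => (a k + b k) / 2 with hm
  have key : ∀ s ∈ P.support, eval a (monomial s (coeff s P)) - eval b (monomial s (coeff s P)) =
      ∑ j, eval m (pderiv j (monomial s (coeff s P))) * (a j - b j) := by
    intro s hs
    set c := coeff s P with hc
    have hdeg : s.degree = 2 := by
      have := hP (mem_support_iff.mp hs)
      rwa [Finsupp.degree_eq_weight_one]
    obtain ⟨i, j, hsij⟩ := finsupp_degree_two s hdeg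
    have hmono : (monomial s c : MvPolynomial (Fin n) ℂ) = C c * X i * X j := by
      rw [hsij, C_apply, X, X, monomial_mul, monomial_mul]
      simp [add_comm, add_assoc]
    rw [hmono]
    have hterm : ∀ k, eval m (pderiv k (C c * X i * X j)) * (a k - b k)
        = (if i = k then c * m j * (a k - b k) else 0)
          + (if j = k then c * m i * (a k - b k) else 0) := by
      intro k
      by_cases hik : i = k <;> by_cases hjk : j = k
      · subst hik; subst hjk
        simp only [pderiv_mul, pderiv_C, pderiv_X_self, zero_mul, mul_zero, zero_add, add_zero,
          mul_one, one_mul, eval_mul, eval_add, eval_C, eval_X, map_zero, map_add, map_mul,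
          eq_self_iff_true, if_true]
        ring
      · subst hik
        simp only [pderiv_mul, pderiv_C, pderiv_X_self, pderiv_X_of_ne hjk, zero_mul, mul_zero,
          zero_add, add_zero, mul_one, one_mul, eval_mul, eval_add, eval_C, eval_X, map_zero,
          map_add, map_mul, eq_self_iff_true, if_true, if_neg hjk]
      · subst hjk
        simp only [pderiv_mul, pderiv_C, pderiv_X_self, pderiv_X_of_ne hik, zero_mul, mul_zero,
          zero_add, add_zero, mul_one, one_mul, eval_mul, eval_add, eval_C, eval_X, map_zero,
          map_add, map_mul, eq_self_iff_true, if_true, if_neg hik]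
      · simp only [pderiv_mul, pderiv_C, pderiv_X_of_ne hik, pderiv_X_of_ne hjk, zero_mul,
          mul_zero, zero_add, add_zero, mul_one, one_mul, eval_mul, eval_add, eval_C, eval_X,
          map_zero, map_add, map_mul, if_neg hik, if_neg hjk]
    rw [Finset.sum_congr rfl fun k _ => hterm k, Finset.sum_add_distrib,
      Finset.sum_ite_eq, Finset.sum_ite_eq]
    simp only [Finset.mem_univ, if_true, eval_mul, eval_C, eval_X, hm]
    ring
  calc eval a P - eval b P
      = ∑ s ∈ P.support, (eval a (monomial s (coeff s P)) - eval b (monomial s (coeff s P))) := by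
        conv_lhs => rw [P.as_sum]
        rw [map_sum, map_sum, Finset.sum_sub_distrib]
    _ = ∑ s ∈ P.support, ∑ j, eval m (pderiv j (monomial s (coeff s P))) * (a j - b j) :=
        Finset.sum_congr rfl key
    _ = ∑ j, eval m (pderiv j P) * (a j - b j) := by
        rw [Finset.sum_comm]
        refine Finset.sum_congr rfl fun j _ => ?_
        conv_rhs => rw [P.as_sum]
        rw [map_sum, map_sum, Finset.sum_mul]

/-- If `F = Id − F_{(2)}`, where the components of `F_{(2)}` are homogeneous of degree
`2`, has Jacobian determinant identically `1`, then `F` is injective. -/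
theorem id_sub_quadratic_injective (n : ℕ)
    (Q : Fin n → MvPolynomial (Fin n) ℂ)
    (hhom : ∀ i, (Q i).IsHomogeneous 2)
    (hdet : ∀ x : Fin n → ℂ, (jac (fun i => X i - Q i) x).det = 1) :
    Function.Injective (fun (x : Fin n → ℂ) i => eval x (X i - Q i)) := by
  intro a b hab
  set m : Fin n → ℂ := fun k => (a k + b k) / 2 with hm
  have hM : (jac (fun i => X i - Q i) m).mulVec (a - b) = 0 := by
    funext i
    have habi : eval a (X i - Q i) = eval b (X i - Q i) := congrFun hab i
    simp only [Matrix.mulVec, dotProduct, jac, Matrix.of_apply, Pi.sub_apply, Pi.zero_apply]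
    have : ∀ j : Fin n, eval m (pderiv j (X i - Q i)) * (a j - b j)
        = (if i = j then (a j - b j) else 0) - eval m (pderiv j (Q i)) * (a j - b j) := by
      intro j
      by_cases hij : i = j
      · subst hij; simp [map_sub, pderiv_X_self]; ring
      · simp [map_sub, pderiv_X_of_ne (Ne.symm hij), hij]
    rw [Finset.sum_congr rfl fun j _ => this j, Finset.sum_sub_distrib, Finset.sum_ite_eq]
    rw [← midpoint_eval (Q i) (hhom i) a b]
    simp only [Finset.mem_univ, if_true]
    have := habi
    simp only [map_sub, eval_X] at this
    linear_combination this
  have hu : IsUnit (jac (fun i => X i - Q i) m) := by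
    apply Matrix.isUnit_iff_isUnit_det _ |>.mpr
    rw [hdet m]; exact isUnit_one
  have h0 : a - b = 0 := by
    have hinj := Matrix.mulVec_injective_iff_isUnit.mpr hu
    have : (jac (fun i => X i - Q i) m).mulVec (a - b)
        = (jac (fun i => X i - Q i) m).mulVec 0 := by rw [hM, Matrix.mulVec_zero]
    exact hinj this
  exact sub_eq_zero.mp h0
end

section
/- Stable equivalence preserves invertibility: if F : ℂ^n → ℂ^n and G : ℂ^m → ℂ^m (n ≤ m) are polynomial maps such that there exist polynomial automorphisms H, R of ℂ^m with R ∘ G = (F × Id_{ℂ^{m−n}}) ∘ H, then F is a polynomial automorphism if and only if G is. -/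
open MvPolynomial

/-- Evaluation of a polynomial map. -/
noncomputable def evalMap {σ : Type*} (P : σ → MvPolynomial σ ℂ) (x : σ → ℂ) : σ → ℂ :=
  fun i => eval x (P i)

/-- A polynomial map is a polynomial automorphism if it has a polynomial inverse. -/
def IsPolyAuto {σ : Type*} (P : σ → MvPolynomial σ ℂ) : Prop :=
  ∃ Q : σ → MvPolynomial σ ℂ,
    (∀ x, evalMap P (evalMap Q x) = x) ∧ (∀ x, evalMap Q (evalMap P x) = x)

/-- The map `F × Id : ℂ^n × ℂ^k → ℂ^n × ℂ^k`, `(x,y) ↦ (F(x), y)`. -/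
noncomputable def prodId {n k : ℕ} (F : Fin n → MvPolynomial (Fin n) ℂ) :
    Fin n ⊕ Fin k → MvPolynomial (Fin n ⊕ Fin k) ℂ :=
  Sum.elim (fun i => rename Sum.inl (F i)) (fun j => X (Sum.inr j))

lemma aeval_eq_eval' {τ : Type*} (x : τ → ℂ) (q : MvPolynomial τ ℂ) :
    aeval x q = eval x q := by
  rw [aeval_def, Algebra.algebraMap_self]
  rfl

lemma eval_aeval_complex {σ τ : Type*} (x : τ → ℂ) (g : σ → MvPolynomial τ ℂ)
    (p : MvPolynomial σ ℂ) :
    eval x (aeval g p) = eval (fun i => eval x (g i)) p := by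
  have h := comp_aeval_apply (f := g) (aeval x) p
  simp only [aeval_eq_eval'] at h
  exact h

/-- Composition of polynomial maps. -/
noncomputable def pcomp {σ : Type*} (P Q : σ → MvPolynomial σ ℂ) : σ → MvPolynomial σ ℂ :=
  fun i => aeval Q (P i)

lemma evalMap_pcomp {σ : Type*} (P Q : σ → MvPolynomial σ ℂ) (x : σ → ℂ) :
    evalMap (pcomp P Q) x = evalMap P (evalMap Q x) := by
  funext i
  simp only [evalMap, pcomp]
  rw [eval_aeval_complex]
  rfl

lemma evalMap_prodId {n k : ℕ} (F : Fin n → MvPolynomial (Fin n) ℂ)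
    (x : Fin n ⊕ Fin k → ℂ) :
    evalMap (prodId (k := k) F) x =
      Sum.elim (evalMap F (x ∘ Sum.inl)) (x ∘ Sum.inr) := by
  funext s
  cases s <;> simp [evalMap, prodId, eval_rename]

lemma transfer_auto {σ : Type*} (P G H R : σ → MvPolynomial σ ℂ)
    (hH : IsPolyAuto H) (hR : IsPolyAuto R)
    (hcomm : ∀ x, evalMap R (evalMap G x) = evalMap P (evalMap H x)) :
    IsPolyAuto P → IsPolyAuto G := by
  rintro ⟨Pq, hP1, hP2⟩
  obtain ⟨Hq, hH1, hH2⟩ := hH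
  obtain ⟨Rq, hR1, hR2⟩ := hR
  have hG : ∀ y, evalMap G y = evalMap Rq (evalMap P (evalMap H y)) := by
    intro y; rw [← hcomm, hR2]
  refine ⟨pcomp Hq (pcomp Pq R), ?_, ?_⟩
  · intro x
    rw [evalMap_pcomp, evalMap_pcomp, hG, hH1, hP1, hR2]
  · intro x
    rw [evalMap_pcomp, evalMap_pcomp, hcomm, hP2, hH2]

lemma prodId_auto {n k : ℕ} {F : Fin n → MvPolynomial (Fin n) ℂ} (hF : IsPolyAuto F) :
    IsPolyAuto (prodId (k := k) F) := by
  obtain ⟨Q, h1, h2⟩ := hF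
  refine ⟨prodId (k := k) Q, ?_, ?_⟩
  · intro x
    rw [evalMap_prodId, evalMap_prodId]
    funext s
    cases s with
    | inl i => simpa using congrFun (h1 (x ∘ Sum.inl)) i
    | inr j => simp
  · intro x
    rw [evalMap_prodId, evalMap_prodId]
    funext s
    cases s with
    | inl i => simpa using congrFun (h2 (x ∘ Sum.inl)) i
    | inr j => simp

lemma auto_of_prodId {n k : ℕ} {F : Fin n → MvPolynomial (Fin n) ℂ}
    (hF : IsPolyAuto (prodId (k := k) F)) : IsPolyAuto F := by
  obtain ⟨Q, h1, h2⟩ := hF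
  set E : Fin n ⊕ Fin k → MvPolynomial (Fin n) ℂ := Sum.elim X (fun _ => 0) with hE
  refine ⟨fun i => aeval E (Q (Sum.inl i)), ?_, ?_⟩
  · intro y
    have harg : (fun s => eval y (E s)) = Sum.elim y (0 : Fin k → ℂ) := by
      funext s; cases s <;> simp [hE]
    have hQ' : evalMap (fun i => aeval E (Q (Sum.inl i))) y
        = fun i => evalMap Q (Sum.elim y 0) (Sum.inl i) := by
      funext i
      simp only [evalMap, eval_aeval_complex, harg]
    have hQy := h1 (Sum.elim y 0)
    rw [evalMap_prodId] at hQy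
    funext i
    rw [hQ']
    have h3 := congrFun hQy (Sum.inl i)
    simp only [Sum.elim_inl] at h3
    exact h3
  · intro y
    have harg : (fun s => eval (evalMap F y) (E s))
        = Sum.elim (evalMap F y) (0 : Fin k → ℂ) := by
      funext s; cases s <;> simp [hE]
    have hP : evalMap (prodId (k := k) F) (Sum.elim y 0) = Sum.elim (evalMap F y) 0 := by
      rw [evalMap_prodId]
      rfl
    funext i
    show eval (evalMap F y) (aeval E (Q (Sum.inl i))) = y i
    rw [eval_aeval_complex, harg, ← hP]
    exact congrFun (h2 (Sum.elim y 0)) (Sum.inl i)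

/-- Stable equivalence preserves invertibility: if `H` and `R` are polynomial
automorphisms of `ℂ^m = ℂ^n × ℂ^{m−n}` with `R ∘ G = (F × Id) ∘ H`, then `F` is a
polynomial automorphism iff `G` is. -/
theorem stable_equivalence_preserves_invertibility (n k : ℕ)
    (F : Fin n → MvPolynomial (Fin n) ℂ)
    (G : Fin n ⊕ Fin k → MvPolynomial (Fin n ⊕ Fin k) ℂ)
    (H R : Fin n ⊕ Fin k → MvPolynomial (Fin n ⊕ Fin k) ℂ)
    (hH : IsPolyAuto H) (hR : IsPolyAuto R)
    (hcomm : ∀ x, evalMap R (evalMap G x) = evalMap (prodId (k := k) F) (evalMap H x)) :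
    IsPolyAuto F ↔ IsPolyAuto G := by
  constructor
  · intro hF
    exact transfer_auto (prodId (k := k) F) G H R hH hR hcomm (prodId_auto hF)
  · intro hG
    apply auto_of_prodId (k := k)
    obtain ⟨Hq, hH1, hH2⟩ := hH
    obtain ⟨Rq, hR1, hR2⟩ := hR
    refine transfer_auto G (prodId (k := k) F) Hq Rq ⟨H, hH2, hH1⟩ ⟨R, hR2, hR1⟩ ?_ hG
    intro x
    have : evalMap (prodId (k := k) F) x
        = evalMap (prodId (k := k) F) (evalMap H (evalMap Hq x)) := by rw [hH1]
    rw [this, ← hcomm, hR2]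
end

section
/- Let N = N_{(1)} + N_{(3)} : ℂ^n → ℂ^n, where N_{(1)} is linear and N_{(3)} has components homogeneous of degree 3, and suppose the Jacobian matrix of N is nilpotent at every point. Then N has at most one fixed point. -/
open MvPolynomial

namespace AuxNilp

variable {n : ℕ}

lemma degree_eq_sum (m : Fin n →₀ ℕ) : m.degree = ∑ i, m i :=
  Finset.sum_subset (Finset.subset_univ _)
    (fun i _ hi => Finsupp.notMem_support_iff.mp hi)

lemma mem_support_degree {p : MvPolynomial (Fin n) ℂ} {d : ℕ}
    (hp : p.IsHomogeneous d) {m : Fin n →₀ ℕ} (hm : m ∈ p.support) :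
    ∑ i, m i = d := by
  rw [← degree_eq_sum]
  by_contra h
  exact (MvPolynomial.mem_support_iff.mp hm) (hp.coeff_eq_zero h)

lemma eval_mul_smul {p : MvPolynomial (Fin n) ℂ} {d : ℕ}
    (hp : p.IsHomogeneous d) (w : ℂ) (x : Fin n → ℂ) :
    eval (fun i => w * x i) p = w ^ d * eval x p := by
  rw [eval_eq', eval_eq', Finset.mul_sum]
  refine Finset.sum_congr rfl fun m hm => ?_
  have hd : ∑ i, m i = d := mem_support_degree hp hm
  have : ∏ i, (w * x i) ^ m i = w ^ d * ∏ i, x i ^ m i := by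
    rw [← hd, ← Finset.prod_pow_eq_pow_sum]
    rw [← Finset.prod_mul_distrib]
    exact Finset.prod_congr rfl fun i _ => mul_pow _ _ _
  rw [this]; ring

lemma sub_single_apply_ne (m : Fin n →₀ ℕ) {j i : Fin n} (hij : i ≠ j) :
    (m - Finsupp.single j 1 : Fin n →₀ ℕ) i = m i := by
  rw [Finsupp.tsub_apply, Finsupp.single_apply, if_neg fun h => hij h.symm]
  simp

lemma sub_single_apply_eq (m : Fin n →₀ ℕ) (j : Fin n) :
    (m - Finsupp.single j 1 : Fin n →₀ ℕ) j = m j - 1 := by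
  rw [Finsupp.tsub_apply, Finsupp.single_apply, if_pos rfl]

lemma euler_monomial (m : Fin n →₀ ℕ) (c : ℂ) (x : Fin n → ℂ) :
    ∑ j, x j * eval x (pderiv j (monomial m c)) =
      ((∑ i, m i : ℕ) : ℂ) * eval x (monomial m c) := by
  push_cast
  rw [Finset.sum_mul]
  refine Finset.sum_congr rfl fun j _ => ?_
  rw [pderiv_monomial, eval_monomial, eval_monomial, Finsupp.prod_pow, Finsupp.prod_pow]
  rcases Nat.eq_zero_or_pos (m j) with h0 | hpos
  · simp [h0]
  · have hprod : ∏ i, x i ^ m i = x j ^ m j * ∏ i ∈ Finset.univ.erase j, x i ^ m i :=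
      (Finset.mul_prod_erase Finset.univ _ (Finset.mem_univ j)).symm
    have hprod' : ∏ i, x i ^ ((m - Finsupp.single j 1 : Fin n →₀ ℕ) i) =
        x j ^ (m j - 1) * ∏ i ∈ Finset.univ.erase j, x i ^ m i := by
      rw [← Finset.mul_prod_erase Finset.univ _ (Finset.mem_univ j)]
      congr 1
      · rw [sub_single_apply_eq]
      · refine Finset.prod_congr rfl fun i hi => ?_
        rw [sub_single_apply_ne m (Finset.ne_of_mem_erase hi)]
    rw [hprod, hprod']
    have hx : x j * x j ^ (m j - 1) = x j ^ m j := by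
      conv_rhs => rw [← Nat.succ_pred_eq_of_pos hpos]
      rw [pow_succ, Nat.pred_eq_sub_one]
      ring
    push_cast
    calc x j * (c * ↑(m j) * (x j ^ (m j - 1) * ∏ i ∈ Finset.univ.erase j, x i ^ m i))
        = (↑(m j) : ℂ) * (c * ((x j * x j ^ (m j - 1)) * ∏ i ∈ Finset.univ.erase j, x i ^ m i)) := by
          ring
      _ = ↑(m j) * (c * (x j ^ m j * ∏ i ∈ Finset.univ.erase j, x i ^ m i)) := by rw [hx]

lemma euler {p : MvPolynomial (Fin n) ℂ} {d : ℕ} (hp : p.IsHomogeneous d)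
    (x : Fin n → ℂ) :
    ∑ j, x j * eval x (pderiv j p) = (d : ℂ) * eval x p := by
  conv_lhs => rw [p.as_sum]
  conv_rhs => rw [p.as_sum]
  have : ∀ j, eval x (pderiv j (∑ m ∈ p.support, monomial m (coeff m p))) =
      ∑ m ∈ p.support, eval x (pderiv j (monomial m (coeff m p))) := by
    intro j; rw [map_sum, map_sum]
  simp_rw [this, Finset.mul_sum, map_sum, Finset.mul_sum]
  rw [Finset.sum_comm]
  refine Finset.sum_congr rfl fun m hm => ?_
  rw [euler_monomial, mem_support_degree hp hm]

lemma isHomogeneous_pderiv {p : MvPolynomial (Fin n) ℂ} {d : ℕ}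
    (hp : p.IsHomogeneous d) (j : Fin n) :
    (pderiv j p).IsHomogeneous (d - 1) := by
  conv => congr; rw [p.as_sum]
  rw [map_sum]
  refine MvPolynomial.IsHomogeneous.sum _ _ _ fun m hm => ?_
  rw [pderiv_monomial]
  rcases Nat.eq_zero_or_pos (m j) with h0 | hpos
  · simp [h0]
    exact isHomogeneous_zero _ _ _
  · refine isHomogeneous_monomial _ ?_
    have hd : ∑ i, m i = d := mem_support_degree hp hm
    rw [degree_eq_sum]
    have hsplit : ∀ (f : Fin n →₀ ℕ), ∑ i, f i = f j + ∑ i ∈ Finset.univ.erase j, f i :=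
      fun f => (Finset.add_sum_erase Finset.univ f (Finset.mem_univ j)).symm
    have hrest : ∑ i ∈ Finset.univ.erase j, (m - Finsupp.single j 1 : Fin n →₀ ℕ) i =
        ∑ i ∈ Finset.univ.erase j, m i := by
      refine Finset.sum_congr rfl fun i hi => ?_
      rw [sub_single_apply_ne m (Finset.ne_of_mem_erase hi)]
    have hj : (m - Finsupp.single j 1 : Fin n →₀ ℕ) j = m j - 1 := sub_single_apply_eq m j
    rw [hsplit (m - Finsupp.single j 1), hrest, hj]
    rw [hsplit m] at hd
    omega

end AuxNilp

/-- A polynomial map `N = N_{(1)} + N_{(3)}`, where `N_{(1)}` is linear and `N_{(3)}` has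
components homogeneous of degree `3`, whose Jacobian matrix is nilpotent at every point,
has at most one fixed point. -/
theorem linear_plus_cubic_nilpotent_at_most_one_fixed_point (n : ℕ)
    (P Q : Fin n → MvPolynomial (Fin n) ℂ)
    (hP : ∀ i, (P i).IsHomogeneous 1) (hQ : ∀ i, (Q i).IsHomogeneous 3)
    (hnil : ∀ x : Fin n → ℂ, jac (fun i => P i + Q i) x ^ n = 0) :
    ∀ x y : Fin n → ℂ,
      (fun i => eval x (P i + Q i)) = x → (fun i => eval y (P i + Q i)) = y → x = y := by
  suffices key : ∀ z : Fin n → ℂ, (fun i => eval z (P i + Q i)) = z → z = 0 by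
    intro x y hx hy
    rw [key x hx, key y hy]
  intro z hz
  -- a square root of 1/3
  set w : ℂ := ((Real.sqrt 3⁻¹ : ℝ) : ℂ) with hw_def
  have hw : w ^ 2 = (3 : ℂ)⁻¹ := by
    rw [hw_def]
    norm_cast
    rw [Real.sq_sqrt (by norm_num : (0:ℝ) ≤ 3⁻¹)]
    push_cast
    norm_num
  set M : Matrix (Fin n) (Fin n) ℂ := jac (fun i => P i + Q i) (fun i => w * z i) with hM_def
  have hMn : M ^ n = 0 := hnil _
  have hfix : M.mulVec z = z := by
    funext i
    have hi : eval z (P i + Q i) = z i := congrFun hz i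
    have hcalc : ∀ j, M i j = eval z (pderiv j (P i)) + (3:ℂ)⁻¹ * eval z (pderiv j (Q i)) := by
      intro j
      have h1 : (pderiv j (P i)).IsHomogeneous 0 := by
        simpa using AuxNilp.isHomogeneous_pderiv (hP i) j
      have h2 : (pderiv j (Q i)).IsHomogeneous 2 := by
        simpa using AuxNilp.isHomogeneous_pderiv (hQ i) j
      have e1 := AuxNilp.eval_mul_smul h1 w z
      have e2 := AuxNilp.eval_mul_smul h2 w z
      simp only [pow_zero, one_mul] at e1
      rw [hw] at e2
      show eval (fun i => w * z i) (pderiv j (P i + Q i)) = _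
      rw [map_add, map_add, e1, e2]
    have euler1 := AuxNilp.euler (hP i) z
    have euler2 := AuxNilp.euler (hQ i) z
    calc M.mulVec z i = ∑ j, M i j * z j := rfl
      _ = ∑ j, (z j * eval z (pderiv j (P i)) + (3:ℂ)⁻¹ * (z j * eval z (pderiv j (Q i)))) := by
          refine Finset.sum_congr rfl fun j _ => ?_
          rw [hcalc j]; ring
      _ = (∑ j, z j * eval z (pderiv j (P i))) + (3:ℂ)⁻¹ * ∑ j, z j * eval z (pderiv j (Q i)) := by
          rw [Finset.sum_add_distrib, Finset.mul_sum]
      _ = (1 : ℂ) * eval z (P i) + (3:ℂ)⁻¹ * ((3:ℂ) * eval z (Q i)) := by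
          rw [euler1, euler2]; norm_num
      _ = eval z (P i) + eval z (Q i) := by
          rw [one_mul, ← mul_assoc, inv_mul_cancel₀ (by norm_num : (3:ℂ) ≠ 0), one_mul]
      _ = z i := by rw [← hi, map_add]
  have hpow : ∀ k : ℕ, (M ^ k).mulVec z = z := by
    intro k
    induction k with
    | zero => simp [Matrix.one_mulVec]
    | succ k ih =>
      rw [pow_succ', ← Matrix.mulVec_mulVec, ih, hfix]
  have := hpow n
  rw [hMn, Matrix.zero_mulVec] at this
  exact this.symm
end
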